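/- Let α > γ > 0, σ ≥ μ > 0, β > σ/γ and λ > 1. Then δ₁(β, λ) < 0, where δ₁(β, λ) = (1/(2λ))·(−μλ + βα b_β − σλ + βγ a_β − √((μλ − βα b_β + σλ − βγ a_β)² − 4(μσλ² − βα b_β σλ − βγ a_β μλ))). -/

import Mathlib

/-- The positive constant solution component `a_β`. -/
noncomputable def aβ (μ σ α γ β : ℝ) : ℝ := (β * α - μ) * σ / (β ^ 2 * α * γ - μ * σ)

/-- The positive constant solution component `b_β`. -/
noncomputable def bβ (μ σ α γ β : ℝ) : ℝ := (β * γ - σ) * μ / (β ^ 2 * α * γ - μ * σ)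

/-- The smaller eigenvalue `δ₁(β, λ)` of the matrix `D(β, λ)` (times λ). -/
noncomputable def delta₁ (μ σ α γ β lam : ℝ) : ℝ :=
  (1 / (2 * lam)) * (-(μ * lam) + β * α * bβ μ σ α γ β - σ * lam + β * γ * aβ μ σ α γ β -
    Real.sqrt ((μ * lam - β * α * bβ μ σ α γ β + σ * lam - β * γ * aβ μ σ α γ β) ^ 2 -
      4 * (μ * σ * lam ^ 2 - β * α * bβ μ σ α γ β * σ * lam -
        β * γ * aβ μ σ α γ β * μ * lam)))

/-- The larger eigenvalue `δ₂(β, λ)` of the matrix `D(β, λ)` (times λ). -/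
noncomputable def delta₂ (μ σ α γ β lam : ℝ) : ℝ :=
  (1 / (2 * lam)) * (-(μ * lam) + β * α * bβ μ σ α γ β - σ * lam + β * γ * aβ μ σ α γ β +
    Real.sqrt ((μ * lam - β * α * bβ μ σ α γ β + σ * lam - β * γ * aβ μ σ α γ β) ^ 2 -
      4 * (μ * σ * lam ^ 2 - β * α * bβ μ σ α γ β * σ * lam -
        β * γ * aβ μ σ α γ β * μ * lam)))

/-! With `P = βα b_β + βγ a_β`, one computes
`μ + σ - P = μσ (β(α + γ) - (μ + σ)) / (β²αγ - μσ)`, which is positive because `βγ > σ` and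
`βα > βγ > σ ≥ μ`. Hence the trace part `-(μ + σ)λ + P` of `2λ δ₁` is negative for `λ ≥ 1`,
and subtracting the square root, whatever the discriminant, keeps it negative. -/

theorem add_sub_mul_bβ_add_mul_aβ (μ σ α γ β : ℝ) (hD : β ^ 2 * α * γ - μ * σ ≠ 0) :
    μ + σ - (β * α * bβ μ σ α γ β + β * γ * aβ μ σ α γ β) =
      μ * σ * (β * (α + γ) - (μ + σ)) / (β ^ 2 * α * γ - μ * σ) := by
  unfold aβ bβ
  field_simp
  ring

theorem mul_bβ_add_mul_aβ_lt_add {μ σ α γ β : ℝ} (hμ : 0 < μ) (hσ : 0 < σ)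
    (hD : μ * σ < β ^ 2 * α * γ) (hβ : μ + σ < β * (α + γ)) :
    β * α * bβ μ σ α γ β + β * γ * aβ μ σ α γ β < μ + σ := by
  have hD' := sub_pos.2 hD
  have hβ' := sub_pos.2 hβ
  have hgap := add_sub_mul_bβ_add_mul_aβ μ σ α γ β hD'.ne'
  have : 0 < μ * σ * (β * (α + γ) - (μ + σ)) / (β ^ 2 * α * γ - μ * σ) := by positivity
  linarith

theorem delta₁_neg_of_lt {μ σ α γ β lam : ℝ} (hlam : 0 < lam)
    (h : β * α * bβ μ σ α γ β + β * γ * aβ μ σ α γ β < (μ + σ) * lam) :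
    delta₁ μ σ α γ β lam < 0 := by
  unfold delta₁
  refine mul_neg_of_pos_of_neg (by positivity) ?_
  exact sub_neg.2 ((by linarith : _ < (0 : ℝ)).trans_le (Real.sqrt_nonneg _))

/-- For α > γ > 0, σ ≥ μ > 0, β > σ/γ and λ > 1, one has δ₁(β, λ) < 0. -/
theorem delta1_two_var_neg
    (μ σ α γ β lam : ℝ) (hαγ : γ < α) (hγ : 0 < γ) (hμσ : μ ≤ σ) (hμ : 0 < μ)
    (hβ : σ / γ < β) (hlam : 1 < lam) :
    delta₁ μ σ α γ β lam < 0 := by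
  have hσ : 0 < σ := hμ.trans_le hμσ
  have hβ0 : 0 < β := (div_pos hσ hγ).trans hβ
  have hβγ : σ < β * γ := (div_lt_iff₀ hγ).1 hβ
  have hβα : μ < β * α := hμσ.trans_lt (hβγ.trans (mul_lt_mul_of_pos_left hαγ hβ0))
  have hD : μ * σ < β ^ 2 * α * γ := by nlinarith [mul_lt_mul'' hβα hβγ hμ.le hσ.le]
  have hsum : μ + σ < β * (α + γ) := by linarith
  exact delta₁_neg_of_lt (by linarith) ((mul_bβ_add_mul_aβ_lt_add hμ hσ hD hsum).trans_le
    (le_mul_of_one_le_right (by positivity) hlam.le))
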